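/- Let L : ℝ^N → [0,∞) be measurable and satisfy an exponentiated norm bound: there exist constants c₀ > 0 and c₁ > 0 such that L(η) ≤ c₀ exp(−c₁ ‖η‖₂) for all η ∈ ℝ^N. Let X be a real N×p matrix, let λ > 0, let d₁,…,d_K ∈ ℝ^p, and let F₁,…,F_L be symmetric positive semidefinite real p×p matrices with stacked matrix D̄. If the stacked (N+K+Lp)×p matrix obtained by stacking X on top of D̄ has rank p, then the posterior kernel β ↦ L(Xβ) · k(β) is Lebesgue-integrable over ℝ^p, where k is the structured sparse kernel. -/

import Mathlib

open MeasureTheory Matrix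

/-!
The exponent `c₁ ‖Xβ‖ + λ (∑ₖ |dₖᵀβ| + ∑ₗ √(βᵀ F_ℓ β))` of the bound
`L(Xβ) k(β) ≤ c₀ exp (-…)` is continuous and positively homogeneous of degree one, and it vanishes
only where `X` stacked on `D̄` does, i.e. only at `0`. Its minimum `ε` on the unit sphere is
therefore positive, so the posterior kernel is dominated by `c₀ exp (-ε ‖β‖)`, which is integrable
by integration in polar coordinates.
-/

section PositivelyHomogeneous

variable {E : Type*} [NormedAddCommGroup E] [NormedSpace ℝ E] [FiniteDimensional ℝ E]

theorem exists_pos_mul_norm_le_of_continuous_of_smul {f : E → ℝ} (hf : Continuous f)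
    (hsmul : ∀ t : ℝ, 0 ≤ t → ∀ x, f (t • x) = t * f x) (hpos : ∀ x ≠ 0, 0 < f x) :
    ∃ ε > 0, ∀ x, ε * ‖x‖ ≤ f x := by
  obtain ⟨ε, hε, hle⟩ := (isCompact_sphere (0 : E) 1).exists_forall_le' hf.continuousOn
    fun x hx => hpos x (ne_zero_of_mem_unit_sphere ⟨x, hx⟩)
  refine ⟨ε, hε, fun x => ?_⟩
  rcases eq_or_ne x 0 with rfl | hx
  · simpa using (hsmul 0 le_rfl 0).ge
  · have hnorm : 0 < ‖x‖ := norm_pos_iff.mpr hx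
    calc ε * ‖x‖ ≤ f (‖x‖⁻¹ • x) * ‖x‖ := by
          gcongr
          exact hle _ (by simp [norm_smul, hnorm.ne'])
      _ = f x := by
          rw [mul_comm, ← hsmul _ hnorm.le, smul_inv_smul₀ hnorm.ne']

variable [MeasurableSpace E] [BorelSpace E] (μ : Measure E) [μ.IsAddHaarMeasure]

theorem integrable_exp_neg_mul_norm {b : ℝ} (hb : 0 < b) :
    Integrable (fun x : E => Real.exp (-(b * ‖x‖))) μ := by
  cases subsingleton_or_nontrivial E
  · simp [Subsingleton.elim _ (0 : E)]
  · rw [integrable_fun_norm_addHaar μ (f := fun y => Real.exp (-(b * y)))]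
    refine (integrableOn_rpow_mul_exp_neg_mul_rpow (s := (Module.finrank ℝ E - 1 : ℕ))
      (neg_one_lt_zero.trans_le (Nat.cast_nonneg _)) one_pos hb).congr_fun (fun y _ => ?_)
      measurableSet_Ioi
    simp [Real.rpow_natCast]

theorem integrable_exp_neg_of_continuous_of_smul {f : E → ℝ} (hf : Continuous f)
    (hsmul : ∀ t : ℝ, 0 ≤ t → ∀ x, f (t • x) = t * f x) (hpos : ∀ x ≠ 0, 0 < f x) :
    Integrable (fun x => Real.exp (-f x)) μ := by
  obtain ⟨ε, hε, hle⟩ := exists_pos_mul_norm_le_of_continuous_of_smul hf hsmul hpos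
  refine (integrable_exp_neg_mul_norm μ hε).mono' (by fun_prop) (ae_of_all _ fun x => ?_)
  rw [Real.norm_eq_abs, abs_of_pos (Real.exp_pos _)]
  exact Real.exp_le_exp.mpr (neg_le_neg (hle x))

end PositivelyHomogeneous

theorem EuclideanSpace.norm_toLp_eq_sqrt_sum_sq {m : Type*} [Fintype m] (η : m → ℝ) :
    ‖WithLp.toLp 2 η‖ = √(∑ i, η i ^ 2) := by
  simp [EuclideanSpace.norm_eq]

theorem Matrix.mulVec_injective_of_rank_eq_card {K m n : Type*} [Field K] [Fintype m]
    [Fintype n] {A : Matrix m n K} (hA : A.rank = Fintype.card n) :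
    Function.Injective A.mulVec := by
  have hker := A.mulVecLin.finrank_range_add_finrank_ker
  rw [Module.finrank_fintype_fun_eq_card] at hker
  have : Module.finrank K (LinearMap.ker A.mulVecLin) = 0 := by
    change A.rank + _ = _ at hker
    omega
  exact LinearMap.ker_eq_bot.mp (Submodule.finrank_eq_zero.mp this)

section StructuredPenalty

variable {ι κ n : Type*} [Fintype n]

/-- The stacked matrix `D̄`: the rows `dₖᵀ` followed by the rows of all the `F_ℓ`. -/
def penaltyMatrix (d : ι → n → ℝ) (F : κ → Matrix n n ℝ) : Matrix (ι ⊕ κ × n) n ℝ :=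
  fromRows (of d) (of fun li => F li.1 li.2)

theorem penaltyMatrix_mulVec_eq_zero_iff (d : ι → n → ℝ) (F : κ → Matrix n n ℝ) (β : n → ℝ) :
    penaltyMatrix d F *ᵥ β = 0 ↔ (∀ k, d k ⬝ᵥ β = 0) ∧ ∀ ℓ, F ℓ *ᵥ β = 0 := by
  rw [penaltyMatrix, fromRows_mulVec, ← Sum.elim_zero_zero, Sum.elim_eq_iff]
  simp only [funext_iff, mulVec, of_apply, Pi.zero_apply, Prod.forall]

variable [Fintype ι] [Fintype κ]

/-- `-log k(β) / λ` for the structured sparse kernel `k`. -/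
noncomputable def structuredPenalty (d : ι → n → ℝ) (F : κ → Matrix n n ℝ) (β : n → ℝ) : ℝ :=
  ∑ k, |d k ⬝ᵥ β| + ∑ ℓ, √(β ⬝ᵥ F ℓ *ᵥ β)

variable (d : ι → n → ℝ) (F : κ → Matrix n n ℝ)

theorem structuredPenalty_nonneg (β : n → ℝ) : 0 ≤ structuredPenalty d F β := by
  unfold structuredPenalty
  positivity

theorem continuous_structuredPenalty : Continuous (structuredPenalty d F) := by
  unfold structuredPenalty
  simp only [mulVec, dotProduct]
  fun_prop

theorem structuredPenalty_smul {t : ℝ} (ht : 0 ≤ t) (β : n → ℝ) :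
    structuredPenalty d F (t • β) = t * structuredPenalty d F β := by
  have hquad : ∀ ℓ, √((t • β) ⬝ᵥ F ℓ *ᵥ (t • β)) = t * √(β ⬝ᵥ F ℓ *ᵥ β) := fun ℓ => by
    rw [mulVec_smul, dotProduct_smul, smul_dotProduct, smul_smul, smul_eq_mul, ← sq,
      Real.sqrt_mul (sq_nonneg t), Real.sqrt_sq ht]
  simp only [structuredPenalty, dotProduct_smul, smul_eq_mul, abs_mul, abs_of_nonneg ht, hquad,
    ← Finset.mul_sum, mul_add]

theorem structuredPenalty_eq_zero_iff (hF : ∀ ℓ, (F ℓ).PosSemidef) (β : n → ℝ) :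
    structuredPenalty d F β = 0 ↔ penaltyMatrix d F *ᵥ β = 0 := by
  rw [penaltyMatrix_mulVec_eq_zero_iff]
  have hquad : ∀ ℓ, 0 ≤ β ⬝ᵥ F ℓ *ᵥ β := fun ℓ => by
    simpa using (hF ℓ).dotProduct_mulVec_nonneg β
  rw [structuredPenalty, add_eq_zero_iff_of_nonneg (by positivity) (by positivity),
    Finset.sum_eq_zero_iff_of_nonneg (fun _ _ => abs_nonneg _),
    Finset.sum_eq_zero_iff_of_nonneg (fun _ _ => Real.sqrt_nonneg _)]
  have hker : ∀ ℓ, β ⬝ᵥ F ℓ *ᵥ β = 0 ↔ F ℓ *ᵥ β = 0 := fun ℓ => by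
    simpa using (hF ℓ).dotProduct_mulVec_zero_iff β
  simp only [Finset.mem_univ, true_implies, abs_eq_zero, Real.sqrt_eq_zero (hquad _), hker]

theorem integrable_exp_neg_norm_mulVec_add_structuredPenalty {m : Type*} [Fintype m]
    (X : Matrix m n ℝ) {c lam : ℝ} (hc : 0 < c) (hlam : 0 < lam) (hF : ∀ ℓ, (F ℓ).PosSemidef)
    (hinj : Function.Injective (fromRows X (penaltyMatrix d F)).mulVec) :
    Integrable (fun β => Real.exp (-(c * ‖WithLp.toLp 2 (X *ᵥ β)‖ +
      lam * structuredPenalty d F β))) := by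
  have hcont := continuous_structuredPenalty d F
  refine integrable_exp_neg_of_continuous_of_smul volume (by fun_prop) (fun t ht β => ?_)
    (fun β hβ => ?_)
  · rw [structuredPenalty_smul d F ht, mulVec_smul, WithLp.toLp_smul, norm_smul,
      Real.norm_of_nonneg ht]
    ring
  · have hnonneg : 0 ≤ c * ‖WithLp.toLp 2 (X *ᵥ β)‖ := by positivity
    have hpen := structuredPenalty_nonneg d F β
    refine lt_of_le_of_ne (by positivity) fun h => hβ (hinj ?_)
    obtain ⟨hXβ, hpenβ⟩ := (add_eq_zero_iff_of_nonneg hnonneg (by positivity)).mp h.symm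
    rw [mulVec_zero, fromRows_mulVec, ← Sum.elim_zero_zero, Sum.elim_eq_iff,
      ← structuredPenalty_eq_zero_iff d F hF]
    exact ⟨by simpa [hc.ne'] using hXβ, by simpa [hlam.ne'] using hpenβ⟩

end StructuredPenalty

theorem posterior_proper_of_ENB_and_full_rank_general
    (N p K L : ℕ) (Lik : (Fin N → ℝ) → ℝ)
    (hLik_meas : Measurable Lik) (hLik_nonneg : ∀ η, 0 ≤ Lik η)
    (c₀ c₁ : ℝ) (hc₁ : 0 < c₁)
    (hENB : ∀ η : Fin N → ℝ, Lik η ≤ c₀ * Real.exp (-(c₁ * Real.sqrt (∑ i, η i ^ 2))))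
    (X : Matrix (Fin N) (Fin p) ℝ) (lam : ℝ) (hlam : 0 < lam)
    (d : Fin K → (Fin p → ℝ))
    (F : Fin L → Matrix (Fin p) (Fin p) ℝ)
    (hFpsd : ∀ ℓ, (F ℓ).PosSemidef)
    (hrank : (Matrix.of (Sum.elim (fun n => X n)
        (Sum.elim d (fun li : Fin L × Fin p => F li.1 li.2)))).rank = p) :
    Integrable (fun β : Fin p → ℝ =>
      Lik (X *ᵥ β) *
        Real.exp (-(lam * ((∑ k, |d k ⬝ᵥ β|) +
          ∑ ℓ, Real.sqrt (β ⬝ᵥ (F ℓ) *ᵥ β))))) volume := by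
  have hinj : Function.Injective (fromRows X (penaltyMatrix d F)).mulVec :=
    mulVec_injective_of_rank_eq_card (by rw [Fintype.card_fin]; exact hrank)
  have hmajorant := (integrable_exp_neg_norm_mulVec_add_structuredPenalty d F X hc₁ hlam hFpsd
    hinj).const_mul c₀
  refine hmajorant.mono' ?_ (ae_of_all _ fun β => ?_)
  · have hkernel := ((continuous_structuredPenalty d F).const_mul lam).neg.rexp
    exact ((hLik_meas.comp (continuous_const.matrix_mulVec continuous_id).measurable).mul
      hkernel.measurable).aestronglyMeasurable
  · calc ‖Lik (X *ᵥ β) * Real.exp (-(lam * structuredPenalty d F β))‖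
        = Lik (X *ᵥ β) * Real.exp (-(lam * structuredPenalty d F β)) :=
          Real.norm_of_nonneg (mul_nonneg (hLik_nonneg _) (Real.exp_pos _).le)
      _ ≤ c₀ * Real.exp (-(c₁ * ‖WithLp.toLp 2 (X *ᵥ β)‖)) *
            Real.exp (-(lam * structuredPenalty d F β)) := by
          rw [EuclideanSpace.norm_toLp_eq_sqrt_sum_sq]
          exact mul_le_mul_of_nonneg_right (hENB _) (Real.exp_pos _).le
      _ = c₀ * Real.exp (-(c₁ * ‖WithLp.toLp 2 (X *ᵥ β)‖ + lam * structuredPenalty d F β)) := by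
          rw [mul_assoc, ← Real.exp_add, neg_add]

/-- Sufficiency: if the likelihood satisfies an exponentiated norm bound and the augmented
design (X stacked on D̄) has full column rank, the posterior kernel is integrable over ℝ^p. -/
theorem posterior_proper_of_ENB_and_full_rank
    (N p K L : ℕ) (Lik : (Fin N → ℝ) → ℝ)
    (hLik_meas : Measurable Lik) (hLik_nonneg : ∀ η, 0 ≤ Lik η)
    (c₀ c₁ : ℝ) (hc₀ : 0 < c₀) (hc₁ : 0 < c₁)
    (hENB : ∀ η : Fin N → ℝ, Lik η ≤ c₀ * Real.exp (-(c₁ * Real.sqrt (∑ i, η i ^ 2))))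
    (X : Matrix (Fin N) (Fin p) ℝ) (lam : ℝ) (hlam : 0 < lam)
    (d : Fin K → (Fin p → ℝ))
    (F : Fin L → Matrix (Fin p) (Fin p) ℝ)
    (hFsymm : ∀ ℓ, (F ℓ).IsSymm)
    (hFpsd : ∀ ℓ, (F ℓ).PosSemidef)
    (hrank : (Matrix.of (Sum.elim (fun n => X n)
        (Sum.elim d (fun li : Fin L × Fin p => F li.1 li.2)))).rank = p) :
    Integrable (fun β : Fin p → ℝ =>
      Lik (X *ᵥ β) *
        Real.exp (-(lam * ((∑ k, |d k ⬝ᵥ β|) +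
          ∑ ℓ, Real.sqrt (β ⬝ᵥ (F ℓ) *ᵥ β))))) volume :=
  posterior_proper_of_ENB_and_full_rank_general N p K L Lik hLik_meas hLik_nonneg c₀ c₁ hc₁ hENB X
    lam hlam d F hFpsd hrank
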